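/- Applying Ψ entrywise to the matrix Φ^L_w yields Ψ(Φ^L_w) = D_w · Φ^L_w · D^{−1}. -/
import Mathlib


/-!
STATEMENT 9: Applying `Ψ` entrywise to the matrix `Φ^L_w` yields
`Ψ(Φ^L_w) = D_w · Φ^L_w · D^{−1}`.

Setup as in the paper (0-indexed, the strand `1` of the paper corresponding to
`⟨0, _⟩ : Fin n`).  The scalars are extended from `R₀ = ℂ[μ^{±1}, λ^{±1}, U^{±1}]` to
`R₀[g^{±1}]`, which we model as the Laurent polynomial ring in four variables
`R₁ = AddMonoidAlgebra ℂ (Fin 4 →₀ ℤ)` with `μ = x₀, λ = x₁, U = x₂, g = x₃`; the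
ring `F[g^{±1}]` is the polynomial ring over `R₁` in the variables `a_{ij}`,
`i ≠ j ∈ Fin n`, and the matrix `Φ^L_w` (whose entries have integer coefficients in
the `a_{ij}`) is regarded as a matrix over it.  The hypothesis that `π(w)` is an
`n`-cycle is expressed by transitivity of its powers, `d(i)` is the least `k ≥ 0` with
`π(w)^k(i) = 1` (via `Nat.find`), `Ψ(a_{ij}) = (−g)^{d(i)−d(j)}·a_{ij}`,
`D = diag((−g)^{d(1)},…,(−g)^{d(n)})` and `D_w = diag((−g)^{d(π(w)(1))},…)`; the matrix
`D^{−1}` is the diagonal matrix with entries `(−g)^{−d(i)}`.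
-/

noncomputable section

/-- The Laurent polynomial ring `R₁ = R₀[g^{±1}] = ℂ[μ^{±1}, λ^{±1}, U^{±1}, g^{±1}]`. -/
abbrev R1 : Type := AddMonoidAlgebra ℂ (Fin 4 →₀ ℤ)

/-- The Laurent monomial `(−g)^m`, for `m : ℤ`. -/
def ngpow (m : ℤ) : R1 :=
  AddMonoidAlgebra.single (Finsupp.single 3 m) (if Even m then 1 else -1)

/-- The index set of the variables `a_{ij}`, `i ≠ j`. -/
abbrev Vars (n : ℕ) := {p : Fin n × Fin n // p.1 ≠ p.2}

/-- The polynomial ring `F[g^{±1}]` over `R₁` in the variables `a_{ij}`. -/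
abbrev FpolyG (n : ℕ) := MvPolynomial (Vars n) R1

/-- The generator `a_{ij}` (junk value `0` if `i = j`; all uses below have `i ≠ j`). -/
def av (n : ℕ) (i j : Fin n) : FpolyG n :=
  if h : i ≠ j then MvPolynomial.X ⟨(i, j), h⟩ else 0

/-- The image of the generator `a_{ij}` under `φ_{σ_k}`, where `K, K1` stand for the
strands `k, k+1`. -/
def phiGen (n : ℕ) (K K1 : Fin n) (i j : Fin n) : FpolyG n :=
  if i = K ∧ j = K1 then -(av n K1 K)
  else if i = K1 ∧ j = K then -(av n K K1)
  else if i = K then av n K1 j - av n K1 K * av n K j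
  else if i = K1 then av n K j
  else if j = K then av n i K1 - av n i K * av n K K1
  else if j = K1 then av n i K
  else av n i j

/-- The algebra endomorphism `φ_{σ_k}`. -/
def phi (n : ℕ) (K K1 : Fin n) : FpolyG n →ₐ[R1] FpolyG n :=
  MvPolynomial.aeval fun v => phiGen n K K1 v.1.1 v.1.2

/-- The permutation `π(w) = s_{k₁} ∘ ⋯ ∘ s_{k_ℓ}` of a positive braid word. -/
def permWord (n : ℕ) : List {k : ℕ // k + 1 < n} → Equiv.Perm (Fin n)
  | [] => 1
  | k :: w => Equiv.swap ⟨k.1, by have := k.2; omega⟩ ⟨k.1 + 1, k.2⟩ * permWord n w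

/-- The matrix `Φ^L_{σ_k}`. -/
def PhiLgen (n : ℕ) (K K1 : Fin n) : Matrix (Fin n) (Fin n) (FpolyG n) :=
  Matrix.of fun i j =>
    if i = K ∧ j = K then -(av n K1 K)
    else if i = K ∧ j = K1 then 1
    else if i = K1 ∧ j = K then 1
    else if i = K1 ∧ j = K1 then 0
    else if i = j then 1 else 0

/-- `Φ^L` of the empty word is the identity, and `Φ^L_{σ_k w'} = φ_{σ_k}(Φ^L_{w'})·Φ^L_{σ_k}`. -/
def PhiL (n : ℕ) : List {k : ℕ // k + 1 < n} → Matrix (Fin n) (Fin n) (FpolyG n)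
  | [] => 1
  | k :: w =>
      (PhiL n w).map (phi n ⟨k.1, by have := k.2; omega⟩ ⟨k.1 + 1, k.2⟩) *
        PhiLgen n ⟨k.1, by have := k.2; omega⟩ ⟨k.1 + 1, k.2⟩

/-- The `R₁`-algebra automorphism `Ψ` with `Ψ(a_{ij}) = (−g)^{d(i)−d(j)}·a_{ij}`. -/
def Psi (n : ℕ) (d : Fin n → ℤ) : FpolyG n →ₐ[R1] FpolyG n :=
  MvPolynomial.aeval fun v =>
    MvPolynomial.C (ngpow (d v.1.1 - d v.1.2)) * MvPolynomial.X v

/-- The diagonal matrix `diag((−g)^{e(1)},…,(−g)^{e(n)})`. -/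
def Dmat (n : ℕ) (e : Fin n → ℤ) : Matrix (Fin n) (Fin n) (FpolyG n) :=
  Matrix.diagonal fun i => MvPolynomial.C (ngpow (e i))

/-! ### auxiliary lemmas -/

lemma ngpow_add (a b : ℤ) : ngpow (a + b) = ngpow a * ngpow b := by
  unfold ngpow
  rw [AddMonoidAlgebra.single_mul_single, ← Finsupp.single_add]
  by_cases ha : Even a <;> by_cases hb : Even b <;>
    simp [ha, hb, Int.even_add]

lemma ngpow_zero : ngpow 0 = 1 := by
  simp [ngpow, AddMonoidAlgebra.one_def]

open MvPolynomial Equiv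

lemma Cng_smul {n : ℕ} (a b : ℤ) (x y : FpolyG n) :
    (C (ngpow a) * x) * (C (ngpow b) * y) = C (ngpow (a + b)) * (x * y) := by
  rw [ngpow_add, map_mul]; ring

lemma Cng_conj {n : ℕ} (a b : ℤ) (x : FpolyG n) :
    C (ngpow a) * x * C (ngpow b) = C (ngpow (a + b)) * x := by
  rw [ngpow_add, map_mul]; ring

lemma algHom_C' {n : ℕ} (f : FpolyG n →ₐ[R1] FpolyG n) (c : R1) :
    f (C c) = C c := by
  rw [← MvPolynomial.algebraMap_eq, AlgHom.commutes]

lemma Psi_av {n : ℕ} (d : Fin n → ℤ) (i j : Fin n) :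
    Psi n d (av n i j) = C (ngpow (d i - d j)) * av n i j := by
  unfold av
  split
  · exact MvPolynomial.aeval_X _ _
  · simp

lemma phi_X {n : ℕ} (K K1 : Fin n) (v : Vars n) :
    phi n K K1 (X v) = phiGen n K K1 v.1.1 v.1.2 :=
  MvPolynomial.aeval_X _ v

lemma Psi_X {n : ℕ} (d : Fin n → ℤ) (v : Vars n) :
    Psi n d (X v) = C (ngpow (d v.1.1 - d v.1.2)) * X v :=
  MvPolynomial.aeval_X _ v

lemma Psi_phiGen {n : ℕ} (d : Fin n → ℤ) (K K1 : Fin n) (hK : K ≠ K1)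
    {i j : Fin n} (hij : i ≠ j) :
    Psi n d (phiGen n K K1 i j)
      = C (ngpow (d (swap K K1 i) - d (swap K K1 j))) * phiGen n K K1 i j := by
  unfold phiGen
  split_ifs with h1 h2 h3 h4 h5 h6
  · rw [h1.1, h1.2, map_neg, Psi_av, swap_apply_left, swap_apply_right]; ring
  · rw [h2.1, h2.2, map_neg, Psi_av, swap_apply_right, swap_apply_left]; ring
  · have hjK1 : j ≠ K1 := fun hj => h1 ⟨h3, hj⟩
    have hjK : j ≠ K := fun hj => hij (by rw [h3, hj])
    rw [h3, map_sub, map_mul, Psi_av, Psi_av, Psi_av, Cng_smul, sub_add_sub_cancel,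
      swap_apply_left, swap_apply_of_ne_of_ne hjK hjK1, mul_sub]
  · have hjK : j ≠ K := fun hj => h2 ⟨h4, hj⟩
    have hjK1 : j ≠ K1 := fun hj => hij (by rw [h4, hj])
    rw [h4, Psi_av, swap_apply_right, swap_apply_of_ne_of_ne hjK hjK1]
  · rw [h5, map_sub, map_mul, Psi_av, Psi_av, Psi_av, Cng_smul, sub_add_sub_cancel,
      swap_apply_left, swap_apply_of_ne_of_ne h3 h4, mul_sub]
  · rw [h6, Psi_av, swap_apply_right, swap_apply_of_ne_of_ne h3 h4]
  · rw [Psi_av, swap_apply_of_ne_of_ne h3 h4, swap_apply_of_ne_of_ne h5 h6]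

lemma Psi_comp_phi {n : ℕ} (d : Fin n → ℤ) (K K1 : Fin n) (hK : K ≠ K1) :
    (Psi n d).comp (phi n K K1)
      = (phi n K K1).comp (Psi n (fun i => d (swap K K1 i))) := by
  apply MvPolynomial.algHom_ext
  rintro ⟨⟨i, j⟩, hij⟩
  rw [AlgHom.comp_apply, AlgHom.comp_apply, phi_X, Psi_X, map_mul, algHom_C', phi_X]
  exact Psi_phiGen d K K1 hK hij


lemma matMap_mul {n : ℕ} (f : FpolyG n →ₐ[R1] FpolyG n)
    (A B : Matrix (Fin n) (Fin n) (FpolyG n)) :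
    (A * B).map f = A.map f * B.map f := by
  refine Matrix.ext fun i j => ?_
  simp [Matrix.map_apply, Matrix.mul_apply, map_sum]

lemma matMap_one {n : ℕ} (f : FpolyG n →ₐ[R1] FpolyG n) :
    (1 : Matrix (Fin n) (Fin n) (FpolyG n)).map f = 1 :=
  Matrix.map_one _ (map_zero f) (map_one f)

lemma Dmat_map {n : ℕ} (e : Fin n → ℤ) (f : FpolyG n →ₐ[R1] FpolyG n) :
    (Dmat n e).map f = Dmat n e := by
  unfold Dmat
  rw [Matrix.diagonal_map (map_zero f)]
  exact congrArg _ (funext fun i => algHom_C' f _)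

lemma Dmat_mul_Dmat {n : ℕ} (e e' : Fin n → ℤ) :
    Dmat n e * Dmat n e' = Dmat n (fun i => e i + e' i) := by
  unfold Dmat
  rw [Matrix.diagonal_mul_diagonal]
  exact congrArg _ (funext fun i => by rw [← map_mul, ← ngpow_add])

lemma Dmat_neg_mul {n : ℕ} (e : Fin n → ℤ) :
    Dmat n (fun i => -(e i)) * Dmat n e = 1 := by
  rw [Dmat_mul_Dmat]
  simp [Dmat, ngpow_zero]

lemma map_PhiLgen {n : ℕ} (d : Fin n → ℤ) (K K1 : Fin n) (hK : K ≠ K1) :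
    (PhiLgen n K K1).map (Psi n d)
      = Dmat n (fun i => d (swap K K1 i)) * PhiLgen n K K1
          * Dmat n (fun i => -(d i)) := by
  refine Matrix.ext fun i j => ?_
  rw [Matrix.map_apply, Dmat, Dmat, Matrix.mul_diagonal, Matrix.diagonal_mul, Cng_conj]
  show Psi n d (PhiLgen n K K1 i j) = _
  unfold PhiLgen
  simp only [Matrix.of_apply]
  split_ifs with h1 h2 h3 h4 h5
  · rw [h1.1, h1.2, map_neg, Psi_av, swap_apply_left, ← sub_eq_add_neg]; ring
  · rw [h2.1, h2.2, map_one, swap_apply_left, ← sub_eq_add_neg, sub_self, ngpow_zero,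
      map_one, one_mul]
  · rw [h3.1, h3.2, map_one, swap_apply_right, ← sub_eq_add_neg, sub_self, ngpow_zero,
      map_one, one_mul]
  · simp
  · have hiK : i ≠ K := fun hi => h1 ⟨hi, h5 ▸ hi⟩
    have hiK1 : i ≠ K1 := fun hi => h4 ⟨hi, h5 ▸ hi⟩
    rw [h5, map_one, swap_apply_of_ne_of_ne (h5 ▸ hiK) (h5 ▸ hiK1), ← sub_eq_add_neg,
      sub_self, ngpow_zero, map_one, one_mul]
  · simp


lemma key {n : ℕ} (w : List {k : ℕ // k + 1 < n}) :
    ∀ d : Fin n → ℤ,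
    (PhiL n w).map (Psi n d)
      = Dmat n (fun i => d (permWord n w i)) * PhiL n w
          * Dmat n (fun i => -(d i)) := by
  induction w with
  | nil =>
    intro d
    rw [PhiL, matMap_one, Matrix.mul_one, Dmat_mul_Dmat]
    simp [permWord, Dmat, ngpow_zero]
  | cons k w ih =>
    intro d
    have hk2 := k.2
    set K : Fin n := ⟨k.1, by omega⟩ with hKdef
    set K1 : Fin n := ⟨k.1 + 1, k.2⟩ with hK1def
    have hK : K ≠ K1 := by simp [hKdef, hK1def, Fin.ext_iff]
    have hperm : (fun i => d (permWord n (k :: w) i))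
        = fun i => d (swap K K1 (permWord n w i)) := by
      funext i
      rw [permWord, Equiv.Perm.mul_apply]
    have hcomp : (⇑(Psi n d) ∘ ⇑(phi n K K1))
        = ⇑(phi n K K1) ∘ ⇑(Psi n (fun i => d (swap K K1 i))) := by
      rw [← AlgHom.coe_comp, ← AlgHom.coe_comp, Psi_comp_phi d K K1 hK]
    have cancel : Dmat n (fun i => -(d (swap K K1 i)))
        * Dmat n (fun i => d (swap K K1 i)) = 1 := Dmat_neg_mul _
    show ((PhiL n w).map (phi n K K1) * PhiLgen n K K1).map (Psi n d)
      = Dmat n (fun i => d (permWord n (k :: w) i))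
          * ((PhiL n w).map (phi n K K1) * PhiLgen n K K1)
          * Dmat n fun i => -(d i)
    rw [hperm, matMap_mul, Matrix.map_map, hcomp, ← Matrix.map_map, ih,
      matMap_mul, matMap_mul, Dmat_map, Dmat_map, map_PhiLgen d K K1 hK]
    rw [Matrix.mul_assoc, Matrix.mul_assoc, Matrix.mul_assoc,
      ← Matrix.mul_assoc (Dmat n fun i => -(d (swap K K1 i))), cancel,
      Matrix.one_mul]
    simp only [Matrix.mul_assoc]

/-- `Ψ(Φ^L_w) = D_w · Φ^L_w · D^{−1}`. -/
theorem Psi_PhiL (n : ℕ) (hn : 2 ≤ n) (w : List {k : ℕ // k + 1 < n})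
    (h : ∀ i j : Fin n, ∃ m : ℕ, ((permWord n w) ^ m) i = j) :
    (PhiL n w).map (Psi n fun i => (Nat.find (h i ⟨0, by omega⟩) : ℤ))
      = Dmat n (fun i => (Nat.find (h (permWord n w i) ⟨0, by omega⟩) : ℤ)) *
          PhiL n w *
          Dmat n (fun i => -(Nat.find (h i ⟨0, by omega⟩) : ℤ)) := by
  exact key w fun i => (Nat.find (h i ⟨0, by omega⟩) : ℤ)

end
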